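/- Let P̃ be the set of all finite products M(a₁,e₀)·M(a₂,e₁)·⋯·M(aₙ,eₙ₋₁), where n ≥ 1, e₀ = 1, each aᵢ is an odd positive integer, each eᵢ ∈ {+1,−1}, aᵢ + eᵢ ≥ 2 for all i, and M(a,e) = [[a, 1],[e, 0]]. Then P̃ = S, where S = { [[a, b],[c, d]] ∈ Γ̃ : a,b,c,d ≥ 0, 0 ≤ d ≤ b, 1 ≤ c ≤ a, a > g·b }. -/

import Mathlib

noncomputable section

/-- The golden ratio `G = (1+√5)/2`. -/
def Gphi : ℝ := (1 + Real.sqrt 5) / 2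

/-- `g = (√5−1)/2`. -/
def gphi : ℝ := (Real.sqrt 5 - 1) / 2

/-- Entrywise congruence mod 2 of integer 2×2 matrices. -/
def Mod2Eq (σ τ : Matrix (Fin 2) (Fin 2) ℤ) : Prop := ∀ i j, σ i j % 2 = τ i j % 2

/-- `Γ̃ = {σ ∈ GL(2,ℤ) : σ ≡ I, A or B (mod 2)}`. -/
def GammaTilde : Set (Matrix (Fin 2) (Fin 2) ℤ) :=
  {σ | (σ.det = 1 ∨ σ.det = -1) ∧
    (Mod2Eq σ 1 ∨ Mod2Eq σ !![0, 1; 1, 1] ∨ Mod2Eq σ !![1, 1; 1, 0])}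

/-- `S₊₁`. -/
def Splus : Set (Matrix (Fin 2) (Fin 2) ℤ) :=
  {σ | σ ∈ GammaTilde ∧ 0 ≤ σ 0 0 ∧ 0 ≤ σ 0 1 ∧ 0 ≤ σ 1 0 ∧ 0 ≤ σ 1 1 ∧
    σ 1 1 ≤ σ 0 1 ∧ 1 ≤ σ 1 0 ∧ σ 1 0 ≤ σ 0 0 ∧ gphi * (σ 0 1 : ℝ) < (σ 0 0 : ℝ)}

/-- `S₋₁` (matrices of the form `[[a, −b],[c, −d]]`). -/
def Sminus : Set (Matrix (Fin 2) (Fin 2) ℤ) :=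
  {σ | σ ∈ GammaTilde ∧ 0 ≤ σ 0 0 ∧ 0 ≤ -σ 0 1 ∧ 0 ≤ σ 1 0 ∧ 0 ≤ -σ 1 1 ∧
    -σ 1 1 ≤ -σ 0 1 ∧ 1 ≤ σ 1 0 ∧ σ 1 0 ≤ σ 0 0 ∧
    (Gphi + 1) * ((-σ 0 1 : ℤ) : ℝ) < (σ 0 0 : ℝ)}

/-- The set `P̃` of finite products `M(a₁,e₀)M(a₂,e₁)⋯M(aₙ,eₙ₋₁)` with
`M(a,e) = [[a,1],[e,0]]` and `e₀ = 1`. -/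
def Ptilde : Set (Matrix (Fin 2) (Fin 2) ℤ) :=
  {M | ∃ (n : ℕ) (a e : ℕ → ℤ), 0 < n ∧ e 0 = 1 ∧
    (∀ i, 1 ≤ i → i ≤ n → Odd (a i) ∧ 0 < a i ∧ (e i = 1 ∨ e i = -1) ∧ 2 ≤ a i + e i) ∧
    M = ((List.range n).map (fun i => !![a (i + 1), 1; e i, 0])).prod}

/-!
Right multiplication by `M(a, e)` sends each row `(x, y)` to `(a x + e y, x)`, so `P̃` is a signed
Euclidean algorithm run backwards. Write `σ = !![A, B; C, D]`. The inequalities of `S` survive a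
step `σ ↦ σ M(a, e)` provided a step with `e = -1` follows a quotient `≥ 3`, and products whose
last quotient is `≥ 3` satisfy the stronger bounds `(g + 2) B < A`, `D < C`, `B - D ≤ A - C` that
such a step needs. Conversely, if `D ≠ 0`, let `a` be the odd integer nearest to `A / B - g` (at
distance `< 1` because `g` is irrational) and `e` the sign of `A - a B` (nonzero by a parity
argument in `Γ̃`); then `σ = σ' M(a, e)` with `σ' ∈ S` smaller, and `(g + 2) B' < A'` when
`e = -1`. The descent ends at `D = 0`, where `σ = M(A, 1)`.
-/

lemma gphi_pos : 0 < gphi := by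
  unfold gphi
  nlinarith [Real.sq_sqrt (show (0 : ℝ) ≤ 5 by norm_num), Real.sqrt_nonneg 5]

lemma gphi_sq : gphi ^ 2 = 1 - gphi := by
  unfold gphi
  linear_combination Real.sq_sqrt (show (0 : ℝ) ≤ 5 by norm_num) / 4

lemma gphi_lt_one : gphi < 1 := by nlinarith [gphi_sq, gphi_pos]

lemma gphi_sq_mul_add_two : gphi ^ 2 * (gphi + 2) = 1 := by
  linear_combination (gphi + 1) * gphi_sq

lemma irrational_gphi : Irrational gphi := by
  simpa [gphi] using (Nat.prime_five.irrational_sqrt.sub_natCast 1).div_natCast two_ne_zero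

def mod2 : Matrix (Fin 2) (Fin 2) ℤ →+* Matrix (Fin 2) (Fin 2) (ZMod 2) :=
  (Int.castRingHom (ZMod 2)).mapMatrix

/-- The reductions of `I`, `A`, `B`: the cyclic group of order 3 generated by `B mod 2`. -/
def parityClasses : Set (Matrix (Fin 2) (Fin 2) (ZMod 2)) :=
  {1, !![0, 1; 1, 1], !![1, 1; 1, 0]}

lemma mul_mem_parityClasses {x y : Matrix (Fin 2) (Fin 2) (ZMod 2)}
    (hx : x ∈ parityClasses) (hy : y ∈ parityClasses) : x * y ∈ parityClasses := by
  simp only [parityClasses, Set.mem_insert_iff, Set.mem_singleton_iff] at *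
  rcases hx with rfl | rfl | rfl <;> rcases hy with rfl | rfl | rfl <;> decide

lemma mul_mul_self_eq_one_of_mem_parityClasses {x : Matrix (Fin 2) (Fin 2) (ZMod 2)}
    (hx : x ∈ parityClasses) : x * x * x = 1 := by
  simp only [parityClasses, Set.mem_insert_iff, Set.mem_singleton_iff] at hx
  rcases hx with rfl | rfl | rfl <;> decide

lemma mod2Eq_iff {σ τ : Matrix (Fin 2) (Fin 2) ℤ} : Mod2Eq σ τ ↔ mod2 σ = mod2 τ := by
  simp [Mod2Eq, mod2, ← Matrix.ext_iff, ZMod.intCast_eq_intCast_iff']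

lemma mem_GammaTilde_iff {σ : Matrix (Fin 2) (Fin 2) ℤ} :
    σ ∈ GammaTilde ↔ IsUnit σ.det ∧ mod2 σ ∈ parityClasses := by
  have hA : mod2 !![0, 1; 1, 1] = !![0, 1; 1, 1] := by
    ext i j; fin_cases i <;> fin_cases j <;> simp [mod2]
  have hB : mod2 !![1, 1; 1, 0] = !![1, 1; 1, 0] := by
    ext i j; fin_cases i <;> fin_cases j <;> simp [mod2]
  simp only [GammaTilde, Set.mem_ofPred_eq, Int.isUnit_iff, mod2Eq_iff, map_one, hA, hB,
    parityClasses, Set.mem_insert_iff, Set.mem_singleton_iff]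

lemma isUnit_det_iff {σ : Matrix (Fin 2) (Fin 2) ℤ} :
    IsUnit σ.det ↔
      σ 0 0 * σ 1 1 - σ 0 1 * σ 1 0 = 1 ∨ σ 0 0 * σ 1 1 - σ 0 1 * σ 1 0 = -1 := by
  rw [Int.isUnit_iff, Matrix.det_fin_two]

namespace GammaTilde

variable {σ τ : Matrix (Fin 2) (Fin 2) ℤ}

lemma mul_mem (hσ : σ ∈ GammaTilde) (hτ : τ ∈ GammaTilde) : σ * τ ∈ GammaTilde := by
  rw [mem_GammaTilde_iff] at *
  exact ⟨by simpa [Matrix.det_mul] using hσ.1.mul hτ.1,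
    by simpa using mul_mem_parityClasses hσ.2 hτ.2⟩

lemma of_mul_mem (h : σ * τ ∈ GammaTilde) (hτ : τ ∈ GammaTilde) : σ ∈ GammaTilde := by
  rw [mem_GammaTilde_iff, Matrix.det_mul, map_mul] at *
  refine ⟨isUnit_of_mul_isUnit_left h.1, ?_⟩
  have hσ : mod2 σ = mod2 σ * mod2 τ * (mod2 τ * mod2 τ) := by
    rw [mul_assoc, ← mul_assoc (mod2 τ), mul_mul_self_eq_one_of_mem_parityClasses hτ.2, mul_one]
  rw [hσ]
  exact mul_mem_parityClasses h.2 (mul_mem_parityClasses hτ.2 hτ.2)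

lemma even_add (h : σ ∈ GammaTilde) : Even (σ 0 0 + σ 0 1 + σ 1 1) := by
  have hclasses : ∀ x ∈ parityClasses, x 0 0 + x 0 1 + x 1 1 = 0 := by
    simp only [parityClasses, Set.mem_insert_iff, Set.mem_singleton_iff]
    rintro x (rfl | rfl | rfl) <;> decide
  rw [← ZMod.intCast_eq_zero_iff_even]
  simpa [mod2] using hclasses _ (mem_GammaTilde_iff.1 h).2

end GammaTilde

def cfMatrix (a e : ℤ) : Matrix (Fin 2) (Fin 2) ℤ := !![a, 1; e, 0]

lemma mul_cfMatrix (σ : Matrix (Fin 2) (Fin 2) ℤ) (a e : ℤ) :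
    σ * cfMatrix a e =
      !![σ 0 0 * a + σ 0 1 * e, σ 0 0; σ 1 0 * a + σ 1 1 * e, σ 1 0] := by
  ext i j
  fin_cases i <;> fin_cases j <;> simp [cfMatrix, Matrix.mul_apply]

lemma cfMatrix_mem_GammaTilde {a e : ℤ} (ha : Odd a) (he : e = 1 ∨ e = -1) :
    cfMatrix a e ∈ GammaTilde := by
  refine mem_GammaTilde_iff.2 ⟨?_, ?_⟩
  · rw [show (cfMatrix a e).det = -e by simp [cfMatrix, Matrix.det_fin_two], Int.isUnit_iff]
    omega
  · have ha2 : (a : ZMod 2) = 1 := ZMod.intCast_eq_one_iff_odd.2 ha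
    have : mod2 (cfMatrix a e) = !![1, 1; 1, 0] := by
      rcases he with rfl | rfl <;> ext i j <;> fin_cases i <;> fin_cases j <;>
        simp [mod2, cfMatrix, ha2]
    simp [this, parityClasses]

def SIneq (A B C D : ℤ) : Prop :=
  0 ≤ D ∧ D ≤ B ∧ 1 ≤ C ∧ C ≤ A ∧ gphi * B < A

/-- Holds for the products whose last quotient is at least `3`. -/
def StrongSIneq (A B C D : ℤ) : Prop :=
  (gphi + 2) * B < A ∧ D < C ∧ B - D ≤ A - C

lemma mem_Splus_iff {σ : Matrix (Fin 2) (Fin 2) ℤ} :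
    σ ∈ Splus ↔ σ ∈ GammaTilde ∧ SIneq (σ 0 0) (σ 0 1) (σ 1 0) (σ 1 1) := by
  constructor
  · rintro ⟨hΓ, -, -, -, hD, hDB, hC, hCA, hg⟩
    exact ⟨hΓ, hD, hDB, hC, hCA, hg⟩
  · rintro ⟨hΓ, hD, hDB, hC, hCA, hg⟩
    exact ⟨hΓ, by omega, by omega, by omega, hD, hDB, hC, hCA, hg⟩

section Step

variable {A B C D a e : ℤ}

lemma StrongSIneq.lt_gphi_sq_mul (h : StrongSIneq A B C D) : (B : ℝ) < gphi ^ 2 * A :=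
  calc (B : ℝ) = gphi ^ 2 * ((gphi + 2) * B) := by
        linear_combination -(B : ℝ) * gphi_sq_mul_add_two
    _ < gphi ^ 2 * A := mul_lt_mul_of_pos_left h.1 (pow_pos gphi_pos 2)

lemma SIneq.mul_cfMatrix (h : SIneq A B C D) (ha : 1 ≤ a) (he : e = 1 ∨ e = -1)
    (hs : e = -1 → StrongSIneq A B C D) :
    SIneq (A * a + B * e) A (C * a + D * e) C := by
  obtain ⟨hD, hDB, hC, hCA, -⟩ := h
  have hA : (1 : ℝ) ≤ A := by exact_mod_cast hC.trans hCA
  have ha' : (1 : ℝ) ≤ a := by exact_mod_cast ha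
  refine ⟨by omega, hCA, ?_, ?_, ?_⟩ <;> rcases he with rfl | rfl
  · nlinarith
  · nlinarith [(hs rfl).2.1]
  · nlinarith
  · nlinarith [(hs rfl).2.2]
  · have hB : (0 : ℝ) ≤ B := by exact_mod_cast hD.trans hDB
    push_cast
    nlinarith [gphi_lt_one]
  · have := (hs rfl).lt_gphi_sq_mul
    push_cast
    nlinarith [gphi_sq]

lemma SIneq.strongSIneq_mul_cfMatrix (h : SIneq A B C D) (ha : 3 ≤ a) (he : e = 1 ∨ e = -1)
    (hs : e = -1 → StrongSIneq A B C D) :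
    StrongSIneq (A * a + B * e) A (C * a + D * e) C := by
  obtain ⟨hD, hDB, hC, hCA, -⟩ := h
  have hA : (1 : ℝ) ≤ A := by exact_mod_cast hC.trans hCA
  have ha' : (3 : ℝ) ≤ a := by exact_mod_cast ha
  rcases he with rfl | rfl
  · have hB : (0 : ℝ) ≤ B := by exact_mod_cast hD.trans hDB
    refine ⟨?_, by nlinarith, by nlinarith⟩
    push_cast
    nlinarith [gphi_lt_one]
  · obtain ⟨-, hDC, hBD⟩ := hs rfl
    refine ⟨?_, by nlinarith, by nlinarith⟩
    have := (hs rfl).lt_gphi_sq_mul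
    push_cast
    nlinarith [gphi_sq]

end Step

/-- `σ` is a product `M(a₁, e₀) ⋯ M(aₙ, eₙ₋₁)` as in `Ptilde`, with last quotient `aₙ = a`. -/
inductive IsOddProduct : Matrix (Fin 2) (Fin 2) ℤ → ℤ → Prop
  | single {a : ℤ} : Odd a → 0 < a → IsOddProduct (cfMatrix a 1) a
  | snoc {σ : Matrix (Fin 2) (Fin 2) ℤ} {b a e : ℤ} : IsOddProduct σ b → Odd a → 0 < a →
      (e = 1 ∨ e = -1) → 2 ≤ b + e → IsOddProduct (σ * cfMatrix a e) a

namespace IsOddProduct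

variable {σ : Matrix (Fin 2) (Fin 2) ℤ} {a : ℤ}

lemma pos (h : IsOddProduct σ a) : 0 < a := by
  cases h <;> assumption

lemma mem_Splus (h : IsOddProduct σ a) :
    σ ∈ Splus ∧ (3 ≤ a → StrongSIneq (σ 0 0) (σ 0 1) (σ 1 0) (σ 1 1)) := by
  induction h with
  | @single a ha ha0 =>
    have ha1 : (1 : ℝ) ≤ a := by exact_mod_cast ha0
    refine ⟨mem_Splus_iff.2 ⟨cfMatrix_mem_GammaTilde ha (Or.inl rfl), ?_⟩, fun ha3 => ?_⟩
    · refine ⟨le_rfl, zero_le_one, le_rfl, ha0, ?_⟩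
      simpa [cfMatrix] using gphi_lt_one.trans_le ha1
    · have ha3' : (3 : ℝ) ≤ a := by exact_mod_cast ha3
      refine ⟨?_, ?_, ?_⟩ <;> simp only [cfMatrix, Matrix.of_apply, Matrix.cons_val',
        Matrix.cons_val_zero, Matrix.cons_val_one, Matrix.cons_val_fin_one]
      · push_cast
        linarith [gphi_lt_one]
      · exact zero_lt_one
      · omega
  | @snoc σ b a e _ ha ha0 he hbe ih =>
    obtain ⟨hΓ, hS⟩ := mem_Splus_iff.1 ih.1
    have hs : e = -1 → StrongSIneq (σ 0 0) (σ 0 1) (σ 1 0) (σ 1 1) := fun he' =>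
      ih.2 (by omega)
    refine ⟨mem_Splus_iff.2 ⟨GammaTilde.mul_mem hΓ (cfMatrix_mem_GammaTilde ha he), ?_⟩,
      fun ha3 => ?_⟩
    · simpa [mul_cfMatrix] using hS.mul_cfMatrix ha0 he hs
    · simpa [mul_cfMatrix] using hS.strongSIneq_mul_cfMatrix ha3 he hs

lemma exists_prod_range {b : ℤ} (h : IsOddProduct σ b) :
    ∃ (n : ℕ) (a e : ℕ → ℤ), 0 < n ∧ e 0 = 1 ∧
      (∀ i, 1 ≤ i → i ≤ n → Odd (a i) ∧ 0 < a i ∧ (e i = 1 ∨ e i = -1) ∧ 2 ≤ a i + e i) ∧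
      σ = ((List.range n).map fun i => cfMatrix (a (i + 1)) (e i)).prod ∧ a n = b := by
  induction h with
  | @single a ha ha0 =>
    exact ⟨1, fun _ => a, fun _ => 1, one_pos, rfl,
      fun _ _ _ => ⟨ha, ha0, Or.inl rfl, by dsimp only; omega⟩, by simp, rfl⟩
  | @snoc σ b a e _ ha ha0 he hbe ih =>
    obtain ⟨n, a', e', hn, he0, h, rfl, rfl⟩ := ih
    -- `eₙ := e` and `aₙ₊₁ := a`; the sign `eₙ₊₁` is not used by the product, take it `1`
    refine ⟨n + 1, Function.update a' (n + 1) a,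
      Function.update (Function.update e' n e) (n + 1) 1, by omega, ?_, fun i hi hin => ?_, ?_,
      by simp⟩
    · simp [he0, show (0 : ℕ) ≠ n by omega]
    · rcases (show i ≤ n - 1 ∨ i = n ∨ i = n + 1 by omega) with hi' | rfl | rfl
      · simpa [show i ≠ n + 1 by omega, show i ≠ n by omega] using h i hi (by omega)
      · simpa [he, hbe] using (h i hi le_rfl).imp_right (fun h' => h'.1)
      · simpa using ⟨ha, ha0, by omega⟩
    · rw [List.range_succ, List.map_append, List.prod_append, List.map_singleton,
        List.prod_singleton, Function.update_self, Function.update_of_ne (by omega : n ≠ n + 1),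
        Function.update_self]
      congr 2
      refine List.map_congr_left fun i hi => ?_
      have := List.mem_range.1 hi
      simp [show i ≠ n by omega, show i ≠ n + 1 by omega]

end IsOddProduct

lemma isOddProduct_prod_range {a e : ℕ → ℤ} (he0 : e 0 = 1) {n : ℕ} (hn : 0 < n)
    (h : ∀ i, 1 ≤ i → i ≤ n → Odd (a i) ∧ 0 < a i ∧ (e i = 1 ∨ e i = -1) ∧ 2 ≤ a i + e i) :
    IsOddProduct ((List.range n).map fun i => cfMatrix (a (i + 1)) (e i)).prod (a n) := by
  induction n, hn using Nat.le_induction with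
  | base =>
    obtain ⟨ha, ha0, -⟩ := h 1 le_rfl le_rfl
    simpa [he0] using IsOddProduct.single ha ha0
  | succ n hn ih =>
    obtain ⟨ha, ha0, -⟩ := h (n + 1) (by omega) le_rfl
    obtain ⟨-, -, he, hae⟩ := h n hn (by omega)
    rw [List.range_succ, List.map_append, List.prod_append, List.map_singleton,
      List.prod_singleton]
    exact (ih fun i hi hin => h i hi (by omega)).snoc ha ha0 he hae

lemma mem_Ptilde_iff {σ : Matrix (Fin 2) (Fin 2) ℤ} :
    σ ∈ Ptilde ↔ ∃ a, IsOddProduct σ a := by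
  constructor
  · rintro ⟨n, a, e, hn, he0, h, rfl⟩
    exact ⟨a n, isOddProduct_prod_range he0 hn h⟩
  · rintro ⟨b, h⟩
    obtain ⟨n, a, e, hn, he0, hae, rfl, -⟩ := h.exists_prod_range
    exact ⟨n, a, e, hn, he0, hae, rfl⟩

lemma exists_odd_abs_sub_lt_one {x : ℝ} (hx : ∀ k : ℤ, x ≠ 2 * k) :
    ∃ a : ℤ, Odd a ∧ |x - a| < 1 := by
  refine ⟨2 * ⌊x / 2⌋ + 1, odd_two_mul_add_one _, ?_⟩
  have hle : (⌊x / 2⌋ : ℝ) ≤ x / 2 := Int.floor_le _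
  have hlt : x / 2 < ⌊x / 2⌋ + 1 := Int.lt_floor_add_one _
  have hne : 2 * (⌊x / 2⌋ : ℝ) < x := lt_of_le_of_ne (by linarith) (hx _).symm
  rw [abs_sub_lt_iff]
  push_cast
  constructor <;> linarith

/-- `a` is the odd integer nearest to `A / B - g`. -/
lemma exists_odd_near (A B : ℤ) (hB : 0 < B) (hA : gphi * B < A) :
    ∃ a : ℤ, Odd a ∧ 0 < a ∧
      -(gphi ^ 2 * B) < A - a * B ∧ (A - a * B : ℝ) < (1 + gphi) * B := by
  have hB' : (0 : ℝ) < B := by exact_mod_cast hB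
  have hx : ∀ k : ℤ, (A / B - gphi : ℝ) ≠ 2 * k := by
    intro k hk
    apply irrational_gphi.ne_rational (A - 2 * k * B) B
    push_cast
    field_simp at hk ⊢
    linarith
  obtain ⟨a, ha, hxa⟩ := exists_odd_abs_sub_lt_one hx
  obtain ⟨hlt, hgt⟩ := abs_sub_lt_iff.1 hxa
  have hid : (A : ℝ) - a * B = (A / B - gphi - a) * B + gphi * B := by field_simp; ring
  have hAB : gphi < A / B := by rwa [lt_div_iff₀ hB']
  refine ⟨a, ha, ?_, ?_, ?_⟩
  · have : (-1 : ℤ) < a := by exact_mod_cast (show (-1 : ℝ) < a by linarith)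
    obtain ⟨k, rfl⟩ := ha
    omega
  · rw [hid]
    nlinarith [gphi_sq]
  · rw [hid]
    nlinarith

lemma SIneq.of_eq_add {A B C D a e B' D' : ℤ} (h : SIneq A B C D) (hD : 1 ≤ D)
    (hdet : A * D - B * C = 1 ∨ A * D - B * C = -1) (he : e = 1 ∨ e = -1) (hB' : 1 ≤ B')
    (hA : A = a * B + e * B') (hC : C = a * D + e * D')
    (hlow : -(gphi ^ 2 * B) < e * B') (hhigh : e * B' < (1 + gphi) * B) :
    SIneq B B' D D' := by
  obtain ⟨-, hDB, -, hCA, -⟩ := h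
  have hB : 1 ≤ B := hD.trans hDB
  have hB'R : (1 : ℝ) ≤ B' := by exact_mod_cast hB'
  have hdet' : B' * D - B * D' = 1 ∨ B' * D - B * D' = -1 := by
    have : A * D - B * C = e * (B' * D - B * D') := by rw [hA, hC]; ring
    rcases he with rfl | rfl <;> omega
  have hD' : 0 ≤ D' := by
    by_contra! hneg
    rcases hdet' with h | h <;> nlinarith
  refine ⟨hD', ?_, hD, hDB, ?_⟩
  · rcases hDB.lt_or_eq with hlt | rfl
    · rcases hdet' with h | h <;> nlinarith
    · have hD1 : D = 1 := by
        rcases hdet with h | h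
        · exact Int.eq_one_of_mul_eq_one_right (b := A - C) (by omega) (by linear_combination h)
        · exact Int.eq_one_of_mul_eq_one_right (b := C - A) (by omega) (by linear_combination -h)
      subst hD1
      rcases he with rfl | rfl
      · omega
      · push_cast at hlow
        nlinarith [gphi_sq, gphi_pos]
  · have hBR : (1 : ℝ) ≤ B := by exact_mod_cast hB
    rcases he with rfl | rfl
    · push_cast at hhigh
      nlinarith [gphi_sq, gphi_pos]
    · push_cast at hlow
      nlinarith [gphi_sq, gphi_pos]

lemma eq_cfMatrix_of_mem_Splus {σ : Matrix (Fin 2) (Fin 2) ℤ} (hσ : σ ∈ Splus)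
    (hD : σ 1 1 = 0) : ∃ a, Odd a ∧ 0 < a ∧ σ = cfMatrix a 1 := by
  obtain ⟨hΓ, hD0, hDB, hC, hCA, -⟩ := mem_Splus_iff.1 hσ
  have hBC : σ 0 1 * σ 1 0 = 1 := by
    rcases isUnit_det_iff.1 (mem_GammaTilde_iff.1 hΓ).1 with h | h <;> rw [hD] at h
    · nlinarith
    · linarith
  have hB1 : σ 0 1 = 1 := Int.eq_one_of_mul_eq_one_right (by omega) hBC
  have hC1 : σ 1 0 = 1 := Int.eq_one_of_mul_eq_one_left (by omega) hBC
  refine ⟨σ 0 0, ?_, by omega, ?_⟩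
  · have := GammaTilde.even_add hΓ
    rw [hB1, hD, add_zero] at this
    simpa [Int.even_add_one] using this
  · ext i j
    fin_cases i <;> fin_cases j <;> simp [cfMatrix, hB1, hC1, hD]

lemma ne_mul_of_mem_Splus {σ : Matrix (Fin 2) (Fin 2) ℤ} (hσ : σ ∈ Splus) (hD : 1 ≤ σ 1 1)
    {a : ℤ} (ha : Odd a) : σ 0 0 ≠ a * σ 0 1 := by
  obtain ⟨hΓ, -, hDB, -, -, -⟩ := mem_Splus_iff.1 hσ
  intro hA
  have hB : σ 0 1 = 1 := by
    rcases isUnit_det_iff.1 (mem_GammaTilde_iff.1 hΓ).1 with h | h <;> rw [hA] at h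
    · exact Int.eq_one_of_mul_eq_one_right (b := a * σ 1 1 - σ 1 0) (by omega)
        (by linear_combination h)
    · exact Int.eq_one_of_mul_eq_one_right (b := σ 1 0 - a * σ 1 1) (by omega)
        (by linear_combination -h)
  have := GammaTilde.even_add hΓ
  rw [hA, hB, show σ 1 1 = 1 by omega, Int.even_iff] at this
  rw [Int.odd_iff] at ha
  omega

lemma exists_eq_mul_cfMatrix {σ : Matrix (Fin 2) (Fin 2) ℤ} (hσ : σ ∈ Splus)
    (hD : 1 ≤ σ 1 1) :
    ∃ σ' a e, σ' ∈ Splus ∧ σ = σ' * cfMatrix a e ∧ Odd a ∧ 0 < a ∧ (e = 1 ∨ e = -1) ∧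
      (e = -1 → (gphi + 2) * σ' 0 1 < σ' 0 0) ∧ ((gphi + 2) * σ 0 1 < σ 0 0 → 3 ≤ a) ∧
      σ' 0 0 + σ' 0 1 < σ 0 0 + σ 0 1 := by
  obtain ⟨hΓ, hS⟩ := mem_Splus_iff.1 hσ
  have hB : 0 < σ 0 1 := by linarith [hS.2.1]
  have hBR : (0 : ℝ) < σ 0 1 := by exact_mod_cast hB
  obtain ⟨a, ha, ha0, hlow, hhigh⟩ := exists_odd_near (σ 0 0) (σ 0 1) hB hS.2.2.2.2
  obtain ⟨e, B', he, hB', hA⟩ : ∃ e B' : ℤ, (e = 1 ∨ e = -1) ∧ 1 ≤ B' ∧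
      σ 0 0 = a * σ 0 1 + e * B' := by
    rcases (ne_mul_of_mem_Splus hσ hD ha).lt_or_gt with h | h
    · exact ⟨-1, a * σ 0 1 - σ 0 0, Or.inr rfl, by omega, by ring⟩
    · exact ⟨1, σ 0 0 - a * σ 0 1, Or.inl rfl, by omega, by ring⟩
  set D' := e * (σ 1 0 - a * σ 1 1)
  have hC : σ 1 0 = a * σ 1 1 + e * D' := by rcases he with rfl | rfl <;> ring
  have heB' : (e * B' : ℝ) = σ 0 0 - a * σ 0 1 := by
    exact_mod_cast (by linarith : e * B' = σ 0 0 - a * σ 0 1)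
  have hS' := hS.of_eq_add hD (isUnit_det_iff.1 (mem_GammaTilde_iff.1 hΓ).1) he hB' hA hC
    (heB' ▸ hlow) (heB' ▸ hhigh)
  have hσ' : σ = !![σ 0 1, B'; σ 1 1, D'] * cfMatrix a e := by
    rw [mul_cfMatrix]
    ext i j
    fin_cases i <;> fin_cases j <;>
      simp only [Fin.zero_eta, Fin.mk_one, Fin.isValue, Matrix.of_apply, Matrix.cons_val',
        Matrix.cons_val_zero, Matrix.cons_val_one, Matrix.cons_val_fin_one, hA, hC] <;> ring
  refine ⟨!![σ 0 1, B'; σ 1 1, D'], a, e, ?_, hσ', ha, ha0, he, ?_, ?_, ?_⟩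
  · rw [hσ'] at hΓ
    exact mem_Splus_iff.2
      ⟨GammaTilde.of_mul_mem hΓ (cfMatrix_mem_GammaTilde ha he), by simpa using hS'⟩
  · rintro rfl
    simp only [Matrix.of_apply, Matrix.cons_val', Matrix.cons_val_zero, Matrix.cons_val_one,
      Matrix.cons_val_fin_one]
    have hB'g : (B' : ℝ) < gphi ^ 2 * σ 0 1 := by push_cast at heB'; linarith
    calc (gphi + 2) * B' < (gphi + 2) * (gphi ^ 2 * σ 0 1) := by gcongr; linarith [gphi_pos]
      _ = σ 0 1 := by linear_combination (σ 0 1 : ℝ) * gphi_sq_mul_add_two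
  · intro h3
    have : (1 : ℤ) < a := by exact_mod_cast (show (1 : ℝ) < a by nlinarith)
    obtain ⟨k, rfl⟩ := ha
    omega
  · simp only [Matrix.of_apply, Matrix.cons_val', Matrix.cons_val_zero, Matrix.cons_val_one,
      Matrix.cons_val_fin_one]
    rcases he with rfl | rfl
    · nlinarith
    · have : (B' : ℝ) < σ 0 0 := by
        push_cast at heB'
        nlinarith [gphi_sq, gphi_pos, hS.2.2.2.2]
      have : B' < σ 0 0 := by exact_mod_cast this
      linarith

lemma exists_isOddProduct_of_mem_Splus {σ : Matrix (Fin 2) (Fin 2) ℤ} (hσ : σ ∈ Splus) :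
    ∃ a, IsOddProduct σ a ∧ ((gphi + 2) * σ 0 1 < σ 0 0 → 3 ≤ a) := by
  induction hn : (σ 0 0 + σ 0 1).toNat using Nat.strong_induction_on generalizing σ with
  | _ n ih =>
  rcases (mem_Splus_iff.1 hσ).2.1.eq_or_lt with hD | hD
  · obtain ⟨a, ha, ha0, rfl⟩ := eq_cfMatrix_of_mem_Splus hσ hD.symm
    refine ⟨a, .single ha ha0, fun h3 => ?_⟩
    have h3' : gphi + 2 < (a : ℝ) := by simpa [cfMatrix] using h3
    have : (2 : ℤ) < a := by exact_mod_cast (show (2 : ℝ) < a by linarith [gphi_pos])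
    omega
  · obtain ⟨σ', a, e, hσ', rfl, ha, ha0, he, hstrong, h3, hlt⟩ := exists_eq_mul_cfMatrix hσ hD
    have hA' : 0 ≤ σ' 0 0 := hσ'.2.1
    have hB' : 0 ≤ σ' 0 1 := hσ'.2.2.1
    obtain ⟨b, hb, hb3⟩ := ih _ (by omega) hσ' rfl
    refine ⟨a, hb.snoc ha ha0 he ?_, h3⟩
    rcases he with rfl | rfl
    · linarith [hb.pos]
    · linarith [hb3 (hstrong rfl)]

theorem Ptilde_eq_S : Ptilde = Splus := by
  ext σ
  rw [mem_Ptilde_iff]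
  exact ⟨fun ⟨_, h⟩ => h.mem_Splus.1,
    fun h => (exists_isOddProduct_of_mem_Splus h).imp fun _ h => h.1⟩
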